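/- arXiv:2504.21122 — 2 statements merged into one kernel-verified Lean document; each statement's English description precedes it below -/
import Mathlib

section
/- In the three-level normal hierarchical model, for every node index j, the marginal law of Y_j (the pushforward of the joint law under the Y_j coordinate) equals the Gaussian measure on ℝ with mean m0 and variance 1/c0; in particular each Y_j has the same marginal law as the anchor variable W. -/
open MeasureTheory ProbabilityTheory

noncomputable section

/-- Index type for unordered pairs `j < k` of nodes. -/
abbrev PairIdx (p : ℕ) := {q : Fin p × Fin p // q.1 < q.2}

/-- Symmetric extension of a function defined on pairs `j < k`. -/
def symExt {p : ℕ} (z : PairIdx p → ℝ) (j k : Fin p) : ℝ :=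
  if h : j < k then z ⟨(j, k), h⟩ else if h' : k < j then z ⟨(k, j), h'⟩ else 0

/-- The joint law of `(W, (Z_{jk})_{j<k}, (Y_1,…,Y_p))` in the three-level normal
hierarchical model: `W ~ N(m0, 1/c0)`; given `W = w`, the `Z_{jk}` are independent
`N(w, 1/c_{jk})`; given `Z = z` (extended symmetrically), the `Y_j` are independent
`N((c0 m0 + ∑_{k≠j} c_{jk} z_{jk})/(c0 + ∑_{k≠j} c_{jk}), 1/(c0 + ∑_{k≠j} c_{jk}))`. -/
def normalHierJoint (p : ℕ) (m0 c0 : ℝ) (c : Fin p → Fin p → ℝ) :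
    Measure (ℝ × (PairIdx p → ℝ) × (Fin p → ℝ)) :=
  (gaussianReal m0 (1 / c0).toNNReal).bind fun w =>
    (Measure.pi fun q : PairIdx p =>
        gaussianReal w (1 / c q.1.1 q.1.2).toNNReal).bind fun z =>
      (Measure.pi fun j : Fin p =>
          gaussianReal
            ((c0 * m0 + ∑ k ∈ Finset.univ.erase j, c j k * symExt z j k) /
              (c0 + ∑ k ∈ Finset.univ.erase j, c j k))
            (1 / (c0 + ∑ k ∈ Finset.univ.erase j, c j k)).toNNReal).map
        fun y => (w, z, y)

/-!
Fix a node `j`, write `T = ∑_{k ≠ j} c_{jk}` and `S = c0 + T`. Given `W = w`, the `Z_{jk}` are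
independent `N(w, 1/c_{jk})`, so the conditional mean `(c0 m0 + ∑_{k ≠ j} c_{jk} Z_{jk}) / S` of
`Y_j` is `N((c0 m0 + T w) / S, T / S²)`. Mixing `N(x, v')` over a Gaussian location
`x ~ N(m, v)` gives the convolution `N(m, v + v')`, so `Y_j ∣ W = w ~ N((c0 m0 + T w) / S,
T / S² + 1 / S)`, and mixing once more over `W ~ N(m0, 1/c0)` gives mean `m0` and variance
`T² / (c0 S²) + (T + c0) / S² = 1 / c0`.
-/

open scoped NNReal

namespace ProbabilityTheory.Kernel

variable {α ι : Type*} [MeasurableSpace α] [Fintype ι] {β : ι → Type*}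
  [∀ i, MeasurableSpace (β i)]

lemma measurable_measure_pi (κ : ∀ i, Kernel α (β i)) [∀ i, IsMarkovKernel (κ i)] :
    Measurable fun a => Measure.pi fun i => κ i a := by
  refine .measure_of_isPiSystem_of_isProbabilityMeasure generateFrom_pi.symm isPiSystem_pi ?_
  rintro _ ⟨s, hs, rfl⟩
  simp_rw [Measure.pi_pi]
  exact Finset.measurable_prod _ fun i _ => (κ i).measurable_coe (hs i (Set.mem_univ i))

def pi (κ : ∀ i, Kernel α (β i)) [∀ i, IsMarkovKernel (κ i)] : Kernel α (∀ i, β i) :=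
  ⟨fun a => Measure.pi fun i => κ i a, measurable_measure_pi κ⟩

variable (κ : ∀ i, Kernel α (β i)) [∀ i, IsMarkovKernel (κ i)]

lemma pi_apply (a : α) : pi κ a = Measure.pi fun i => κ i a := rfl

instance : IsMarkovKernel (pi κ) := ⟨fun a => by rw [pi_apply]; infer_instance⟩

lemma map_eval_pi [DecidableEq ι] (i : ι) : (pi κ).map (Function.eval i) = κ i := by
  ext1 a
  rw [map_apply _ (measurable_pi_apply i), pi_apply, Measure.pi_map_eval]
  simp

end ProbabilityTheory.Kernel

namespace MeasureTheory.Measure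

lemma comap_comp_eq_comp_map {α β γ : Type*} [MeasurableSpace α] [MeasurableSpace β]
    [MeasurableSpace γ] (μ : Measure γ) (κ : Kernel α β) {f : γ → α} (hf : Measurable f) :
    κ.comap f hf ∘ₘ μ = κ ∘ₘ μ.map f := by
  ext s hs
  rw [bind_apply hs (Kernel.aemeasurable _), bind_apply hs (Kernel.aemeasurable _),
    lintegral_map (κ.measurable_coe hs) hf]
  rfl

lemma comp_eq_conv {M : Type*} [AddMonoid M] [MeasurableSpace M] [MeasurableAdd₂ M]
    (μ ν : Measure M) [SFinite ν] (κ : Kernel M M) (hκ : ∀ x, κ x = ν.map (x + ·)) :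
    κ ∘ₘ μ = μ ∗ ν := by
  ext s hs
  rw [bind_apply hs (Kernel.aemeasurable _), ← lintegral_indicator_one hs,
    lintegral_conv (measurable_one.indicator hs)]
  refine lintegral_congr fun x => ?_
  rw [hκ, map_apply (measurable_const_add x) hs,
    ← lintegral_indicator_one (measurable_const_add x hs)]
  rfl

end MeasureTheory.Measure

section Gaussian

lemma gaussianReal_map_mul_add {m : ℝ} {v : ℝ≥0} (a b : ℝ) :
    (gaussianReal m v).map (fun x => a * x + b) =
      gaussianReal (a * m + b) (.mk (a ^ 2) (sq_nonneg _) * v) := by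
  rw [← gaussianReal_map_add_const, ← gaussianReal_map_const_mul,
    Measure.map_map (measurable_add_const b) (measurable_const_mul a)]
  rfl

lemma map_sum_pi_gaussianReal {ι : Type*} [Fintype ι] (m : ι → ℝ) (v : ι → ℝ≥0) :
    (Measure.pi fun i => gaussianReal (m i) (v i)).map (fun z => ∑ i, z i) =
      gaussianReal (∑ i, m i) (∑ i, v i) := by
  refine Measure.ext_of_charFun (funext fun t => ?_)
  simp_rw [charFun_map_sum_pi_eq_prod, Finset.prod_apply, charFun_gaussianReal,
    ← Complex.exp_sum]
  push_cast
  rw [Finset.sum_sub_distrib, Finset.mul_sum, Finset.sum_mul, Finset.sum_mul, Finset.sum_div]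

lemma map_sum_mul_pi_gaussianReal {ι : Type*} [Fintype ι] (m : ι → ℝ) (v : ι → ℝ≥0)
    (a : ι → ℝ) :
    (Measure.pi fun i => gaussianReal (m i) (v i)).map (fun z => ∑ i, a i * z i) =
      gaussianReal (∑ i, a i * m i) (∑ i, .mk (a i ^ 2) (sq_nonneg _) * v i) := by
  have hscale : Measurable fun (z : ι → ℝ) i => a i * z i := by fun_prop
  rw [← map_sum_pi_gaussianReal, show (fun z : ι → ℝ => ∑ i, a i * z i) =
      (fun z => ∑ i, z i) ∘ (fun z i => a i * z i) from rfl,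
    ← Measure.map_map (by fun_prop) hscale,
    Measure.pi_map_pi fun i => (measurable_const_mul (a i)).aemeasurable]
  simp_rw [gaussianReal_map_const_mul]

def gaussianRealKernel (v : ℝ≥0) : Kernel ℝ ℝ :=
  ⟨fun x => gaussianReal x v, by fun_prop⟩

lemma gaussianRealKernel_apply (v : ℝ≥0) (x : ℝ) :
    gaussianRealKernel v x = gaussianReal x v :=
  rfl

instance (v : ℝ≥0) : IsMarkovKernel (gaussianRealKernel v) :=
  ⟨fun x => by rw [gaussianRealKernel_apply]; infer_instance⟩

lemma gaussianRealKernel_comp_gaussianReal (m : ℝ) (v v' : ℝ≥0) :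
    gaussianRealKernel v' ∘ₘ gaussianReal m v = gaussianReal m (v + v') := by
  rw [Measure.comp_eq_conv _ (gaussianReal 0 v'), gaussianReal_conv_gaussianReal, add_zero]
  intro x
  rw [gaussianRealKernel_apply, gaussianReal_map_const_add, zero_add]

lemma gaussianRealKernel_comap_comp {α : Type*} [MeasurableSpace α] {μ : Measure α}
    {f : α → ℝ} (hf : Measurable f) {m : ℝ} {v : ℝ≥0} (hμ : μ.map f = gaussianReal m v)
    (v' : ℝ≥0) :
    (gaussianRealKernel v').comap f hf ∘ₘ μ = gaussianReal m (v + v') := by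
  rw [Measure.comap_comp_eq_comp_map, hμ, gaussianRealKernel_comp_gaussianReal]

end Gaussian

open Finset

section Pairs

variable {p : ℕ}

lemma sum_pairIdx (F : Fin p → Fin p → ℝ) :
    ∑ q : PairIdx p, F q.1.1 q.1.2 = ∑ a, ∑ b, if a < b then F a b else 0 := by
  rw [← Fintype.sum_prod_type', ← Finset.sum_filter, ← Finset.sum_subtype_eq_sum_filter,
    Finset.subtype_univ]

lemma symExt_of_lt (z : PairIdx p → ℝ) {j k : Fin p} (h : j < k) :
    symExt z j k = z ⟨(j, k), h⟩ :=
  dif_pos h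

lemma symExt_comm (z : PairIdx p → ℝ) (j k : Fin p) : symExt z j k = symExt z k j := by
  unfold symExt
  split_ifs <;> first | rfl | omega

lemma symExt_self (z : PairIdx p → ℝ) (j : Fin p) : symExt z j j = 0 := by
  simp [symExt]

lemma symExt_const (w : ℝ) {j k : Fin p} (h : j ≠ k) : symExt (fun _ => w) j k = w := by
  unfold symExt
  split_ifs <;> first | rfl | omega

lemma measurable_symExt (j k : Fin p) : Measurable fun z : PairIdx p → ℝ => symExt z j k := by
  unfold symExt
  split_ifs <;> fun_prop

def edgeWeight (j : Fin p) (f : Fin p → ℝ) (q : PairIdx p) : ℝ :=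
  if q.1.1 = j then f q.1.2 else if q.1.2 = j then f q.1.1 else 0

lemma sum_edgeWeight_mul (j : Fin p) (f : Fin p → ℝ) (z : PairIdx p → ℝ) :
    ∑ q, edgeWeight j f q * z q = ∑ k ∈ univ.erase j, f k * symExt z j k := by
  have hsplit : ∀ a b, (if a < b then
      (if a = j then f b else if b = j then f a else 0) * symExt z a b else 0) =
      (if a = j then (if j < b then f b * symExt z j b else 0) else 0) +
        (if b = j then (if a < j then f a * symExt z j a else 0) else 0) := by
    intro a b
    split_ifs <;> subst_vars <;> simp_all [symExt_comm z b]
  calc ∑ q, edgeWeight j f q * z q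
      = ∑ q : PairIdx p, (if q.1.1 = j then f q.1.2 else if q.1.2 = j then f q.1.1 else 0) *
          symExt z q.1.1 q.1.2 :=
        Finset.sum_congr rfl fun q _ => by rw [symExt_of_lt z q.2]; rfl
    _ = ∑ k, (if j < k then f k * symExt z j k else 0) +
          ∑ k, (if k < j then f k * symExt z j k else 0) := by
        rw [sum_pairIdx fun a b => (if a = j then f b else if b = j then f a else 0) *
          symExt z a b]
        simp_rw [hsplit, Finset.sum_add_distrib, ← Finset.ite_sum_zero, Finset.sum_ite_eq',
          Finset.mem_univ, if_true]
    _ = ∑ k ∈ univ.erase j, f k * symExt z j k := by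
        rw [← Finset.sum_add_distrib, Finset.sum_erase _ (by simp [symExt_self])]
        refine Finset.sum_congr rfl fun k _ => ?_
        rcases lt_trichotomy j k with h | rfl | h
        · rw [if_pos h, if_neg h.not_gt, add_zero]
        · simp [symExt_self]
        · rw [if_neg h.not_gt, if_pos h, zero_add]

end Pairs

section Model

variable {p : ℕ} (m0 c0 : ℝ) (c : Fin p → Fin p → ℝ)

def weightedDegree (j : Fin p) : ℝ := ∑ k ∈ univ.erase j, c j k

def nodePrecision (j : Fin p) : ℝ := c0 + weightedDegree c j

def nodeMean (j : Fin p) (z : PairIdx p → ℝ) : ℝ :=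
  (c0 * m0 + ∑ k ∈ univ.erase j, c j k * symExt z j k) / nodePrecision c0 c j

lemma measurable_nodeMean (j : Fin p) : Measurable (nodeMean m0 c0 c j) := by
  have := measurable_symExt (p := p) j
  unfold nodeMean
  fun_prop

def pairKernel : Kernel ℝ (PairIdx p → ℝ) :=
  Kernel.pi fun q : PairIdx p => gaussianRealKernel (1 / c q.1.1 q.1.2).toNNReal

lemma pairKernel_apply (w : ℝ) :
    pairKernel c w = Measure.pi fun q : PairIdx p => gaussianReal w (1 / c q.1.1 q.1.2).toNNReal :=
  rfl

instance : IsMarkovKernel (pairKernel c) := by unfold pairKernel; infer_instance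

def nodeKernel : Kernel (PairIdx p → ℝ) (Fin p → ℝ) :=
  Kernel.pi fun j => (gaussianRealKernel (1 / nodePrecision c0 c j).toNNReal).comap
    (nodeMean m0 c0 c j) (measurable_nodeMean m0 c0 c j)

instance : IsMarkovKernel (nodeKernel m0 c0 c) := by unfold nodeKernel; infer_instance

lemma normalHierJoint_eq_comp :
    normalHierJoint p m0 c0 c =
      (Kernel.id ×ₖ ((Kernel.id ×ₖ nodeKernel m0 c0 c) ∘ₖ pairKernel c)) ∘ₘ
        gaussianReal m0 (1 / c0).toNNReal := by
  unfold normalHierJoint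
  congr 1
  ext1 w
  rw [Kernel.prod_apply, Kernel.id_apply, Measure.dirac_prod, Kernel.comp_apply,
    Measure.map_comp _ _ measurable_prodMk_left]
  congr 1
  ext1 z
  rw [Kernel.map_apply _ measurable_prodMk_left, Kernel.prod_apply, Kernel.id_apply,
    Measure.dirac_prod, Measure.map_map measurable_prodMk_left measurable_prodMk_left]
  rfl

lemma map_fst_normalHierJoint :
    (normalHierJoint p m0 c0 c).map Prod.fst = gaussianReal m0 (1 / c0).toNNReal := by
  rw [normalHierJoint_eq_comp, Measure.map_comp _ _ measurable_fst, ← Kernel.fst_eq,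
    Kernel.fst_prod, Measure.id_comp]

lemma map_node_normalHierJoint_eq_comp (j : Fin p) :
    (normalHierJoint p m0 c0 c).map (fun x => x.2.2 j) =
      ((gaussianRealKernel (1 / nodePrecision c0 c j).toNNReal).comap (nodeMean m0 c0 c j)
        (measurable_nodeMean m0 c0 c j) ∘ₖ pairKernel c) ∘ₘ
        gaussianReal m0 (1 / c0).toNNReal := by
  classical
  have hπ : (fun x : ℝ × (PairIdx p → ℝ) × (Fin p → ℝ) => x.2.2 j) =
      Function.eval j ∘ Prod.snd ∘ Prod.snd := rfl
  rw [normalHierJoint_eq_comp, Measure.map_comp _ _ (by fun_prop), hπ,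
    Kernel.map_comp_right _ (by fun_prop) (measurable_pi_apply j),
    Kernel.map_comp_right _ measurable_snd measurable_snd]
  simp only [← Kernel.snd_eq, Kernel.snd_prod]
  rw [Kernel.snd_comp, Kernel.snd_prod, Kernel.map_comp, nodeKernel, Kernel.map_eval_pi]

end Model

section Marginal

variable {p : ℕ} (m0 c0 : ℝ) {c : Fin p → Fin p → ℝ}

lemma weightedDegree_nonneg (hc : ∀ j k, j ≠ k → 0 < c j k) (j : Fin p) :
    0 ≤ weightedDegree c j :=
  Finset.sum_nonneg fun k hk => (hc j k (Finset.ne_of_mem_erase hk).symm).le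

lemma map_nodeMean_pairKernel (hc : ∀ j k, j ≠ k → 0 < c j k) (hsym : ∀ j k, c k j = c j k)
    (j : Fin p) (w : ℝ) :
    (pairKernel c w).map (nodeMean m0 c0 c j) =
      gaussianReal ((c0 * m0 + weightedDegree c j * w) / nodePrecision c0 c j)
        (weightedDegree c j / nodePrecision c0 c j ^ 2).toNNReal := by
  set S := nodePrecision c0 c j
  set a := edgeWeight j fun k => c j k / S
  have hmean : nodeMean m0 c0 c j = (· + c0 * m0 / S) ∘ fun z => ∑ q, a q * z q := by
    ext z
    rw [Function.comp_apply, sum_edgeWeight_mul, nodeMean, add_div, Finset.sum_div, add_comm]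
    simp_rw [mul_div_right_comm]
    rfl
  have hsum : ∑ q, a q * w = weightedDegree c j / S * w := by
    rw [sum_edgeWeight_mul, weightedDegree, Finset.sum_div, Finset.sum_mul]
    exact Finset.sum_congr rfl fun k hk => by rw [symExt_const w (Finset.ne_of_mem_erase hk).symm]
  have hsq (q : PairIdx p) :
      a q ^ 2 * (1 / c q.1.1 q.1.2) = edgeWeight j (fun k => c j k / S ^ 2) q * 1 := by
    have hq := (hc _ _ q.2.ne).ne'
    unfold a edgeWeight
    split_ifs with h1 h2
    · subst h1
      field_simp
    · subst h2
      rw [hsym] at hq ⊢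
      field_simp
    · simp
  have hvar : ∑ q : PairIdx p, a q ^ 2 * (1 / c q.1.1 q.1.2) = weightedDegree c j / S ^ 2 := by
    rw [Finset.sum_congr rfl fun q _ => hsq q, sum_edgeWeight_mul j _ fun _ => 1, weightedDegree,
      Finset.sum_div]
    exact Finset.sum_congr rfl fun k hk => by
      rw [symExt_const 1 (Finset.ne_of_mem_erase hk).symm, mul_one]
  have hT := weightedDegree_nonneg hc j
  rw [hmean, ← Measure.map_map (measurable_add_const _) (by fun_prop), pairKernel_apply,
    map_sum_mul_pi_gaussianReal, gaussianReal_map_add_const, hsum]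
  congr 1
  · rw [add_div, div_mul_eq_mul_div, add_comm]
  · ext
    rw [Real.coe_toNNReal _ (by positivity), ← hvar, NNReal.coe_sum]
    refine Finset.sum_congr rfl fun q _ => ?_
    rw [NNReal.coe_mul, NNReal.coe_mk, Real.coe_toNNReal _ (by have := hc _ _ q.2.ne; positivity)]

lemma nodeMean_comp_pairKernel (hc : ∀ j k, j ≠ k → 0 < c j k) (hsym : ∀ j k, c k j = c j k)
    (j : Fin p) :
    (gaussianRealKernel (1 / nodePrecision c0 c j).toNNReal).comap (nodeMean m0 c0 c j)
        (measurable_nodeMean m0 c0 c j) ∘ₖ pairKernel c =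
      (gaussianRealKernel ((weightedDegree c j / nodePrecision c0 c j ^ 2).toNNReal +
          (1 / nodePrecision c0 c j).toNNReal)).comap
        (fun w => weightedDegree c j / nodePrecision c0 c j * w + c0 * m0 / nodePrecision c0 c j)
        (by fun_prop) := by
  ext1 w
  rw [Kernel.comp_apply,
    gaussianRealKernel_comap_comp _ (map_nodeMean_pairKernel m0 c0 hc hsym j w),
    Kernel.comap_apply, gaussianRealKernel_apply]
  congr 1
  ring

lemma map_node_normalHierJoint (hc0 : 0 < c0) (hc : ∀ j k, j ≠ k → 0 < c j k)
    (hsym : ∀ j k, c k j = c j k) (j : Fin p) :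
    (normalHierJoint p m0 c0 c).map (fun x => x.2.2 j) = gaussianReal m0 (1 / c0).toNNReal := by
  rw [map_node_normalHierJoint_eq_comp, nodeMean_comp_pairKernel m0 c0 hc hsym,
    gaussianRealKernel_comap_comp _ (gaussianReal_map_mul_add _ _)]
  have hT := weightedDegree_nonneg hc j
  have hS : 0 < nodePrecision c0 c j := by unfold nodePrecision; positivity
  congr 1
  · field_simp
    rw [nodePrecision]
    ring
  · ext
    simp only [NNReal.coe_add, NNReal.coe_mul, NNReal.coe_mk]
    rw [Real.coe_toNNReal _ (by positivity), Real.coe_toNNReal _ (by positivity),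
      Real.coe_toNNReal _ (by positivity), nodePrecision]
    field_simp
    ring

end Marginal

theorem normalHier_marginal_Yj_general (p : ℕ) (m0 c0 : ℝ) (hc0 : 0 < c0)
    (c : Fin p → Fin p → ℝ) (hc : ∀ j k, j ≠ k → 0 < c j k)
    (hsym : ∀ j k, c k j = c j k) (j : Fin p) :
    (normalHierJoint p m0 c0 c).map (fun x => x.2.2 j) =
        gaussianReal m0 (1 / c0).toNNReal ∧
      (normalHierJoint p m0 c0 c).map (fun x => x.2.2 j) =
        (normalHierJoint p m0 c0 c).map (fun x => x.1) := by
  have hY := map_node_normalHierJoint m0 c0 hc0 hc hsym j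
  exact ⟨hY, hY.trans (map_fst_normalHierJoint m0 c0 c).symm⟩

/-- In the three-level normal hierarchical model, the marginal law of every node `Y_j`
is the Gaussian measure with mean `m0` and variance `1/c0`; in particular each `Y_j`
has the same marginal law as the anchor variable `W`. -/
theorem normalHier_marginal_Yj (p : ℕ) (hp : 2 ≤ p) (m0 c0 : ℝ) (hc0 : 0 < c0)
    (c : Fin p → Fin p → ℝ) (hc : ∀ j k, j ≠ k → 0 < c j k)
    (hsym : ∀ j k, c k j = c j k) (j : Fin p) :
    (normalHierJoint p m0 c0 c).map (fun x => x.2.2 j) =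
        gaussianReal m0 (1 / c0).toNNReal ∧
      (normalHierJoint p m0 c0 c).map (fun x => x.2.2 j) =
        (normalHierJoint p m0 c0 c).map (fun x => x.1) :=
  normalHier_marginal_Yj_general p m0 c0 hc0 c hc hsym j
end
end

section
/- In the inverse-beta–negative-binomial hierarchical graphical model, for every node index j, the marginal law of Y_j (pushforward of the joint law under the Y_j coordinate) equals the inverse beta distribution IBe(s0, c0 + 1); in particular each Y_j has the same marginal law as the anchor variable W. -/
/-!
Write `T_j = ∑_{k ≠ j} S_{jk}` and `C_j = ∑_{k ≠ j} c_{jk}`. Given `W = w`, `T_j` is a sum of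
independent `NB(c_{jk}, 1/(w+1))` variables, hence `NB(C_j, 1/(w+1))` (Vandermonde's identity for
multisets), and `Y_j` depends on `S` only through `T_j`, with `Y_j ~ IBe(s0 + t, c0 + 1 + C_j)`
given `T_j = t`. The inverse beta law is a conjugate prior for this likelihood:
`IBe(a, b)(dw) · NB(C, 1/(w+1)){t} = P(T = t) · IBe(a + t, b + C)(dw)`.
So the conditional law of `W` given `T_j = t` is the conditional law of `Y_j` given `T_j = t`,
and `(W, T_j)` and `(Y_j, T_j)` have the same law.
-/

open MeasureTheory ProbabilityTheory

noncomputable section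

/-- Symmetric extension of an `ℕ`-valued function defined on pairs `j < k`. -/
def symExtN {p : ℕ} (s : PairIdx p → ℕ) (j k : Fin p) : ℕ :=
  if h : j < k then s ⟨(j, k), h⟩ else if h' : k < j then s ⟨(k, j), h'⟩ else 0

/-- The inverse beta distribution `IBe(a, b)`: the measure on `ℝ` with density
`x^{a−1}(1+x)^{−(a+b)} Γ(a+b)/(Γ(a)Γ(b))` on `(0,∞)` with respect to Lebesgue
measure. -/
def invBetaMeasure (a b : ℝ) : Measure ℝ :=
  volume.withDensity ((Set.Ioi (0 : ℝ)).indicator fun x =>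
    ENNReal.ofReal (x ^ (a - 1) * (1 + x) ^ (-(a + b)) * Real.Gamma (a + b) /
      (Real.Gamma a * Real.Gamma b)))

/-- The negative binomial distribution `NB(m, q)` on `ℕ`, with pmf
`P(S = s) = (m+s−1 choose s) q^m (1−q)^s`. -/
def negBinomialMeasure (m : ℕ) (q : ℝ) : Measure ℕ :=
  Measure.sum fun s : ℕ =>
    ENNReal.ofReal (((m + s - 1).choose s : ℝ) * q ^ m * (1 - q) ^ s) • Measure.dirac s

/-- The joint law of `(W, (S_{jk})_{j<k}, (Y_1,…,Y_p))` in the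
inverse-beta–negative-binomial hierarchical graphical model: `W ~ IBe(s0, c0 + 1)`;
given `W = w`, the `S_{jk}` are independent `NB(c_{jk}, 1/(w+1))`; given `S = s`
(extended symmetrically), the `Y_j` are independent
`IBe(s0 + ∑_{k≠j} s_{jk}, c0 + ∑_{k≠j} c_{jk} + 1)`. -/
def invBetaNegBinomialJoint (p : ℕ) (s0 c0 : ℝ) (c : Fin p → Fin p → ℕ) :
    Measure (ℝ × (PairIdx p → ℕ) × (Fin p → ℝ)) :=
  (invBetaMeasure s0 (c0 + 1)).bind fun w =>
    (Measure.pi fun q : PairIdx p =>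
        negBinomialMeasure (c q.1.1 q.1.2) (1 / (w + 1))).bind fun s =>
      (Measure.pi fun j : Fin p =>
          invBetaMeasure (s0 + ∑ k ∈ Finset.univ.erase j, (symExtN s j k : ℝ))
            (c0 + (∑ k ∈ Finset.univ.erase j, (c j k : ℝ)) + 1)).map
        fun y => (w, s, y)

open Finset
open scoped ENNReal

namespace MeasureTheory.Measure

theorem tsum_measure_singleton {α : Type*} [MeasurableSpace α] [Countable α]
    [MeasurableSingletonClass α] (μ : Measure α) : ∑' x, μ {x} = μ Set.univ := by
  simpa using μ.tsum_indicator_apply_singleton Set.univ MeasurableSet.univ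

theorem sigmaFinite_of_measure_singleton_lt_top {α : Type*} [MeasurableSpace α] [Countable α]
    {μ : Measure α} (h : ∀ x, μ {x} < ∞) : SigmaFinite μ :=
  sigmaFinite_of_countable (Set.countable_range fun x => {x}) (by rintro _ ⟨x, rfl⟩; exact h x)
    (by ext; simp)

theorem pi_map_subtype_restrict {ι : Type*} [Fintype ι] {α : ι → Type*}
    [∀ i, MeasurableSpace (α i)] (μ : ∀ i, Measure (α i)) [∀ i, IsProbabilityMeasure (μ i)]
    (p : ι → Prop) [DecidablePred p] :
    (Measure.pi μ).map (fun f (i : Subtype p) => f i) = Measure.pi fun i : Subtype p => μ i :=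
  calc (Measure.pi μ).map (fun f (i : Subtype p) => f i)
      = ((Measure.pi μ).map (MeasurableEquiv.piEquivPiSubtypeProd α p)).map Prod.fst := by
        rw [map_map measurable_fst (MeasurableEquiv.measurable _)]; rfl
    _ = Measure.pi fun i : Subtype p => μ i := by
        rw [(measurePreserving_piEquivPiSubtypeProd μ p).map_eq, map_fst_prod, measure_univ,
          one_smul]

variable {α β γ : Type*} [MeasurableSpace α] [MeasurableSpace β] [MeasurableSpace γ]

theorem map_bind {μ : Measure α} {κ : α → Measure β} (hκ : Measurable κ) {f : β → γ}
    (hf : Measurable f) : (μ.bind κ).map f = μ.bind fun a => (κ a).map f := by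
  ext s hs
  have hκf : Measurable fun a => (κ a).map f := (measurable_map f hf).comp hκ
  rw [map_apply hf hs, bind_apply (hf hs) hκ.aemeasurable, bind_apply hs hκf.aemeasurable]
  simp_rw [map_apply hf hs]

theorem bind_map {ν : Measure α} {f : α → β} (hf : Measurable f) {κ : β → Measure γ}
    (hκ : Measurable κ) : (ν.map f).bind κ = ν.bind (κ ∘ f) := by
  ext s hs
  rw [bind_apply hs hκ.aemeasurable, bind_apply hs (hκ.comp hf).aemeasurable,
    lintegral_map (f := fun b => κ b s) ((measurable_coe hs).comp hκ) hf]
  rfl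

theorem measurable_bind_of_countable [Countable β] [MeasurableSingletonClass β]
    {ν : α → Measure β} (hν : ∀ b, Measurable fun a => ν a {b}) {κ : α → β → Measure γ}
    (hκ : ∀ b, Measurable fun a => κ a b) : Measurable fun a => (ν a).bind (κ a) := by
  refine measurable_of_measurable_coe _ fun B hB => ?_
  simp_rw [bind_apply hB (measurable_of_countable _).aemeasurable, lintegral_countable']
  exact Measurable.tsum fun b => ((measurable_coe hB).comp (hκ b)).mul (hν b)

end MeasureTheory.Measure

theorem Nat.multichoose_add (a b t : ℕ) :
    (a + b).multichoose t = ∑ ij ∈ antidiagonal t, a.multichoose ij.1 * b.multichoose ij.2 := by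
  induction a generalizing t with
  | zero => simp [Finset.Nat.sum_antidiagonal_eq_sum_range_succ_mk, sum_range_succ']
  | succ a ih =>
    induction t with
    | zero => simp
    | succ t iht =>
      rw [add_right_comm, Nat.multichoose_succ_succ, ih, ← add_right_comm, iht,
        Finset.Nat.sum_antidiagonal_succ, Finset.Nat.sum_antidiagonal_succ]
      simp only [Nat.multichoose_succ_succ, add_mul, sum_add_distrib, Nat.multichoose_zero_right]
      ring

theorem Nat.multichoose_sum {ι : Type*} [DecidableEq ι] (u : Finset ι) (m : ι → ℕ) (t : ℕ) :
    (∑ i ∈ u, m i).multichoose t = ∑ f ∈ u.piAntidiag t, ∏ i ∈ u, (m i).multichoose (f i) := by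
  induction u using Finset.cons_induction generalizing t with
  | empty => cases t <;> simp [Nat.multichoose_zero_succ]
  | cons i u hi ih =>
    rw [sum_cons, Nat.multichoose_add, piAntidiag_cons hi, sum_disjiUnion]
    refine sum_congr rfl fun ij _ => ?_
    rw [ih, mul_sum, sum_map]
    refine sum_congr rfl fun f hf => ?_
    have hfi : f i = 0 := by
      by_contra h
      exact hi ((mem_piAntidiag.1 hf).2 i h)
    rw [prod_cons]
    congr 1
    · simp [hfi]
    · refine prod_congr rfl fun k hk => ?_
      simp [show k ≠ i from fun h => hi (h ▸ hk)]

theorem one_div_add_one_mem_Ioc {w : ℝ} (hw : 0 ≤ w) : 1 / (w + 1) ∈ Set.Ioc 0 1 :=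
  ⟨by positivity, by rw [div_le_one (by positivity)]; linarith⟩

theorem negBinomialMeasure_singleton (m : ℕ) (q : ℝ) (n : ℕ) :
    negBinomialMeasure m q {n} = ENNReal.ofReal (m.multichoose n * q ^ m * (1 - q) ^ n) := by
  simp [negBinomialMeasure, Nat.multichoose_eq, Measure.sum_apply _ (measurableSet_singleton n),
    Pi.single_apply]

instance sigmaFinite_negBinomialMeasure (m : ℕ) (q : ℝ) :
    SigmaFinite (negBinomialMeasure m q) :=
  Measure.sigmaFinite_of_measure_singleton_lt_top fun n => by
    rw [negBinomialMeasure_singleton]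
    exact ENNReal.ofReal_lt_top

theorem measurable_negBinomialMeasure_singleton {α : Type*} [MeasurableSpace α] {q : α → ℝ}
    (hq : Measurable q) (m n : ℕ) : Measurable fun a => negBinomialMeasure m (q a) {n} := by
  simp_rw [negBinomialMeasure_singleton]
  fun_prop

theorem hasSum_negBinomial_pmf (m : ℕ) {q : ℝ} (hq0 : 0 < q) (hq1 : q ≤ 1) :
    HasSum (fun n : ℕ => (m.multichoose n : ℝ) * q ^ m * (1 - q) ^ n) 1 := by
  cases m with
  | zero =>
    convert hasSum_ite_eq (0 : ℕ) (1 : ℝ) using 2 with n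
    cases n <;> simp [Nat.multichoose_zero_succ]
  | succ k =>
    have hr : ‖1 - q‖ < 1 := by rw [Real.norm_eq_abs, abs_lt]; constructor <;> linarith
    have h := (hasSum_choose_mul_geometric_of_norm_lt_one k hr).mul_left (q ^ (k + 1))
    rw [sub_sub_cancel, mul_one_div_cancel (pow_ne_zero _ hq0.ne')] at h
    refine h.congr_fun fun n => ?_
    rw [Nat.multichoose_eq, Nat.add_right_comm, Nat.add_sub_cancel, add_comm n,
      Nat.choose_symm_add]
    ring

theorem isProbabilityMeasure_negBinomialMeasure (m : ℕ) {q : ℝ} (hq0 : 0 < q) (hq1 : q ≤ 1) :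
    IsProbabilityMeasure (negBinomialMeasure m q) := by
  have hpmf := hasSum_negBinomial_pmf m hq0 hq1
  have h1q : 0 ≤ 1 - q := sub_nonneg.2 hq1
  constructor
  simp_rw [← Measure.tsum_measure_singleton, negBinomialMeasure_singleton]
  rw [← ENNReal.ofReal_tsum_of_nonneg (fun n => by positivity) hpmf.summable, hpmf.tsum_eq,
    ENNReal.ofReal_one]

theorem negBinomialMeasure_pi_map_sum {ι : Type*} [Fintype ι] [DecidableEq ι] (m : ι → ℕ)
    {q : ℝ} (hq0 : 0 ≤ q) (hq1 : q ≤ 1) :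
    (Measure.pi fun i => negBinomialMeasure (m i) q).map (fun f => ∑ i, f i) =
      negBinomialMeasure (∑ i, m i) q := by
  refine Measure.ext_of_singleton fun t => ?_
  have hpre : (fun f : ι → ℕ => ∑ i, f i) ⁻¹' {t} = ((univ : Finset ι).piAntidiag t : Set _) := by
    ext f; simp
  have h1q : 0 ≤ 1 - q := sub_nonneg.2 hq1
  rw [Measure.map_apply (measurable_of_countable _) (measurableSet_singleton t), hpre,
    ← sum_measure_singleton, negBinomialMeasure_singleton, Nat.multichoose_sum]
  simp only [Measure.pi_singleton, negBinomialMeasure_singleton]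
  rw [Nat.cast_sum, sum_mul, sum_mul, ENNReal.ofReal_sum_of_nonneg fun f _ => by positivity]
  refine sum_congr rfl fun f hf => ?_
  rw [← ENNReal.ofReal_prod_of_nonneg fun i _ => by positivity, Nat.cast_prod, prod_mul_distrib,
    prod_mul_distrib, prod_pow_eq_pow_sum, prod_pow_eq_pow_sum, (mem_piAntidiag.1 hf).1]

theorem negBinomialMeasure_pi_map_finsetSum {ι : Type*} [Fintype ι] [DecidableEq ι]
    (m : ι → ℕ) {q : ℝ} (hq0 : 0 < q) (hq1 : q ≤ 1) (u : Finset ι) :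
    (Measure.pi fun i => negBinomialMeasure (m i) q).map (fun f => ∑ i ∈ u, f i) =
      negBinomialMeasure (∑ i ∈ u, m i) q := by
  have := fun i => isProbabilityMeasure_negBinomialMeasure (m i) hq0 hq1
  have hcomp : (fun f : ι → ℕ => ∑ i ∈ u, f i) =
      (fun g : u → ℕ => ∑ i, g i) ∘ (fun f (i : u) => f i) :=
    funext fun f => (sum_coe_sort u f).symm
  rw [hcomp, ← Measure.map_map (measurable_of_countable _) (measurable_of_countable _),
    Measure.pi_map_subtype_restrict, ← sum_coe_sort u m]
  convert negBinomialMeasure_pi_map_sum (fun i : u => m i) hq0.le hq1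

def invBetaDensity (a b : ℝ) : ℝ → ℝ≥0∞ :=
  (Set.Ioi 0).indicator fun x => ENNReal.ofReal (x ^ (a - 1) * (1 + x) ^ (-(a + b)) / beta a b)

theorem invBetaMeasure_eq_withDensity (a b : ℝ) :
    invBetaMeasure a b = volume.withDensity (invBetaDensity a b) := by
  simp_rw [invBetaMeasure, invBetaDensity, beta, div_div_eq_mul_div]

@[fun_prop]
theorem measurable_invBetaDensity (a b : ℝ) : Measurable (invBetaDensity a b) :=
  Measurable.indicator (by fun_prop) measurableSet_Ioi

theorem invBetaDensity_of_pos (a b : ℝ) {x : ℝ} (hx : 0 < x) :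
    invBetaDensity a b x = ENNReal.ofReal (x ^ (a - 1) * (1 + x) ^ (-(a + b)) / beta a b) :=
  Set.indicator_of_mem (Set.mem_Ioi.2 hx) _

theorem invBetaDensity_of_nonpos (a b : ℝ) {x : ℝ} (hx : x ≤ 0) : invBetaDensity a b x = 0 :=
  Set.indicator_of_notMem (by simpa using hx) _

theorem bijOn_div_one_sub : Set.BijOn (fun u : ℝ => u / (1 - u)) (Set.Ioo 0 1) (Set.Ioi 0) := by
  have hinv : Set.InvOn (fun x : ℝ => x / (1 + x)) (fun u => u / (1 - u))
      (Set.Ioo 0 1) (Set.Ioi 0) := by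
    constructor
    · intro u ⟨_, hu1⟩
      have : 1 - u ≠ 0 := by linarith
      field_simp
      ring
    · intro x (hx : 0 < x)
      have : 1 + x ≠ 0 := by linarith
      field_simp
      ring
  refine hinv.bijOn (fun u hu => div_pos hu.1 (by linarith [hu.2])) fun x (hx : 0 < x) => ?_
  refine ⟨by positivity, ?_⟩
  rw [div_lt_one (by positivity)]
  linarith

/-- The substitution `x = u / (1 - u)` turns the inverse beta density into the beta density. -/
theorem lintegral_invBetaDensity {a b : ℝ} (ha : 0 < a) (hb : 0 < b) :
    ∫⁻ x, invBetaDensity a b x = 1 := by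
  have hderiv : ∀ u ∈ Set.Ioo (0 : ℝ) 1,
      HasDerivWithinAt (fun u => u / (1 - u)) (1 / (1 - u) ^ 2) (Set.Ioo 0 1) u := by
    intro u ⟨_, hu1⟩
    have : 1 - u ≠ 0 := by linarith
    exact (((hasDerivAt_id' u).div ((hasDerivAt_id' u).const_sub 1) this).congr_deriv
      (by ring)).hasDerivWithinAt
  rw [← lintegral_betaPDF_eq_one ha hb, lintegral_betaPDF, invBetaDensity,
    lintegral_indicator measurableSet_Ioi, ← bijOn_div_one_sub.image_eq,
    lintegral_image_eq_lintegral_abs_deriv_mul measurableSet_Ioo hderiv bijOn_div_one_sub.injOn]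
  refine setLIntegral_congr_fun measurableSet_Ioo fun u ⟨hu0, hu1⟩ => ?_
  have hv : 0 < 1 - u := by linarith
  rw [← ENNReal.ofReal_mul (abs_nonneg _)]
  congr 1
  have h1 : 1 + u / (1 - u) = (1 - u)⁻¹ := by field_simp; ring
  have h2 : (1 - u) ^ (a + b) = (1 - u) ^ (a - 1) * (1 - u) ^ (b - 1) * (1 - u) ^ 2 := by
    rw [← Real.rpow_add hv, ← Real.rpow_natCast, ← Real.rpow_add hv]
    norm_num
    ring_nf
  have : 0 < (1 - u) ^ (a - 1) := Real.rpow_pos_of_pos hv _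
  rw [abs_of_pos (by positivity), h1, Real.div_rpow hu0.le hv.le, Real.inv_rpow hv.le,
    ← Real.rpow_neg hv.le, neg_neg, h2]
  field_simp

theorem isProbabilityMeasure_invBetaMeasure {a b : ℝ} (ha : 0 < a) (hb : 0 < b) :
    IsProbabilityMeasure (invBetaMeasure a b) :=
  ⟨by rw [invBetaMeasure_eq_withDensity, withDensity_apply _ MeasurableSet.univ,
    Measure.restrict_univ, lintegral_invBetaDensity ha hb]⟩

theorem ae_pos_invBetaMeasure (a b : ℝ) : ∀ᵐ x ∂invBetaMeasure a b, 0 < x := by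
  rw [invBetaMeasure_eq_withDensity, invBetaDensity, withDensity_indicator measurableSet_Ioi]
  exact (withDensity_absolutelyContinuous _ _).ae_le (ae_restrict_mem measurableSet_Ioi)

/-- `P(T = t)` when `W ~ IBe(a, b)` and `T ~ NB(C, 1/(W+1))` given `W`: the beta negative
binomial law. -/
def betaNegBinomialWeight (a b : ℝ) (C t : ℕ) : ℝ≥0∞ :=
  ENNReal.ofReal (C.multichoose t * beta (a + t) (b + C) / beta a b)

/-- Bayes' rule for the conjugate pair: the posterior of `W` given `T = t` is `IBe(a + t, b + C)`.
-/
theorem invBetaDensity_mul_negBinomialMeasure_singleton {a b : ℝ} (ha : 0 < a) (hb : 0 < b)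
    (C t : ℕ) (w : ℝ) :
    invBetaDensity a b w * negBinomialMeasure C (1 / (w + 1)) {t} =
      betaNegBinomialWeight a b C t * invBetaDensity (a + t) (b + C) w := by
  rcases le_or_gt w 0 with hw | hw
  · simp [invBetaDensity_of_nonpos _ _ hw]
  have hw1 : 0 < 1 + w := by linarith
  have hB := beta_pos ha hb
  have hB' : 0 < beta (a + t) (b + C) := beta_pos (by positivity) (by positivity)
  rw [invBetaDensity_of_pos _ _ hw, invBetaDensity_of_pos _ _ hw, negBinomialMeasure_singleton,
    betaNegBinomialWeight, ← ENNReal.ofReal_mul (by positivity),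
    ← ENNReal.ofReal_mul (by positivity)]
  congr 1
  have hpow : w ^ (a + t - 1) = w ^ (a - 1) * w ^ t := by
    rw [show a + t - 1 = a - 1 + t by ring, Real.rpow_add hw, Real.rpow_natCast]
  have hpow' : (1 + w) ^ (-(a + b)) =
      (1 + w) ^ (-(a + t + (b + C))) * ((1 + w) ^ C * (1 + w) ^ t) := by
    rw [← Real.rpow_natCast, ← Real.rpow_natCast, ← Real.rpow_add hw1, ← Real.rpow_add hw1]
    ring_nf
  have hq : 1 - 1 / (w + 1) = w / (1 + w) := by field_simp; ring
  rw [hq, hpow, hpow', add_comm w 1, div_pow, div_pow, one_pow]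
  field_simp

theorem lintegral_negBinomialMeasure_singleton_invBetaMeasure {a b : ℝ} (ha : 0 < a)
    (hb : 0 < b) (C t : ℕ) :
    ∫⁻ w, negBinomialMeasure C (1 / (w + 1)) {t} ∂invBetaMeasure a b =
      betaNegBinomialWeight a b C t := by
  rw [invBetaMeasure_eq_withDensity, lintegral_withDensity_eq_lintegral_mul _
    (measurable_invBetaDensity a b) (measurable_negBinomialMeasure_singleton (by fun_prop) C t)]
  simp_rw [Pi.mul_apply, invBetaDensity_mul_negBinomialMeasure_singleton ha hb]
  rw [lintegral_const_mul _ (measurable_invBetaDensity _ _),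
    lintegral_invBetaDensity (by positivity) (by positivity), mul_one]

theorem sum_betaNegBinomialWeight_smul_invBetaMeasure {a b : ℝ} (ha : 0 < a) (hb : 0 < b)
    (C : ℕ) :
    Measure.sum (fun t : ℕ => betaNegBinomialWeight a b C t • invBetaMeasure (a + t) (b + C)) =
      invBetaMeasure a b := by
  simp_rw [invBetaMeasure_eq_withDensity, ← withDensity_smul _ (measurable_invBetaDensity _ _)]
  rw [← withDensity_tsum fun t => (measurable_invBetaDensity _ _).const_smul _]
  congr 1
  funext y
  simp_rw [ENNReal.tsum_apply, Pi.smul_apply, smul_eq_mul,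
    ← invBetaDensity_mul_negBinomialMeasure_singleton ha hb, ENNReal.tsum_mul_left]
  rcases le_or_gt y 0 with hy | hy
  · simp [invBetaDensity_of_nonpos _ _ hy]
  · have hq := one_div_add_one_mem_Ioc hy.le
    have := isProbabilityMeasure_negBinomialMeasure C hq.1 hq.2
    rw [Measure.tsum_measure_singleton, measure_univ, mul_one]

theorem invBetaMeasure_bind_negBinomialMeasure_bind {a b : ℝ} (ha : 0 < a) (hb : 0 < b) (C : ℕ) :
    (invBetaMeasure a b).bind (fun w => (negBinomialMeasure C (1 / (w + 1))).bind
      fun t => invBetaMeasure (a + t) (b + C)) = invBetaMeasure a b := by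
  have hNB := measurable_negBinomialMeasure_singleton (q := fun w : ℝ => 1 / (w + 1))
    (by fun_prop) C
  have hκ := Measure.measurable_bind_of_countable hNB
    (κ := fun _ t => invBetaMeasure (a + t) (b + C)) fun _ => measurable_const
  ext A hA
  rw [Measure.bind_apply hA hκ.aemeasurable]
  simp_rw [Measure.bind_apply hA (measurable_of_countable _).aemeasurable, lintegral_countable']
  rw [lintegral_tsum fun t => ((hNB t).const_mul _).aemeasurable]
  simp_rw [lintegral_const_mul _ (hNB _),
    lintegral_negBinomialMeasure_singleton_invBetaMeasure ha hb]
  conv_rhs => rw [← sum_betaNegBinomialWeight_smul_invBetaMeasure ha hb C]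
  simp [Measure.sum_apply _ hA, mul_comm]

namespace PairIdx

variable {p : ℕ}

def ofNe {j k : Fin p} (h : k ≠ j) : PairIdx p :=
  if hjk : j < k then ⟨(j, k), hjk⟩ else ⟨(k, j), lt_of_le_of_ne (not_lt.1 hjk) h⟩

theorem ofNe_injective (j : Fin p) : Function.Injective fun k : {k // k ≠ j} => ofNe k.2 := by
  rintro ⟨k, hk⟩ ⟨k', hk'⟩ h
  simp only [ofNe] at h
  split_ifs at h <;> simp_all [Subtype.ext_iff, Prod.ext_iff]

def incident (j : Fin p) : Finset (PairIdx p) :=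
  univ.map ⟨_, ofNe_injective j⟩

theorem sum_incident {M : Type*} [AddCommMonoid M] (j : Fin p) {f : PairIdx p → M}
    {g : Fin p → M} (h : ∀ k (hk : k ≠ j), f (ofNe hk) = g k) :
    ∑ q ∈ incident j, f q = ∑ k ∈ univ.erase j, g k := by
  rw [incident, sum_map, sum_subtype (univ.erase j) (p := (· ≠ j)) (by simp)]
  exact sum_congr rfl fun k _ => h k k.2

theorem apply_ofNe_of_symm {M : Type*} {c : Fin p → Fin p → M} (hsym : ∀ j k, c k j = c j k)
    {j k : Fin p} (hk : k ≠ j) : c (ofNe hk).1.1 (ofNe hk).1.2 = c j k := by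
  unfold ofNe
  split_ifs
  exacts [rfl, hsym j k]

end PairIdx

theorem symExtN_eq_ofNe {p : ℕ} (s : PairIdx p → ℕ) {j k : Fin p} (hk : k ≠ j) :
    symExtN s j k = s (PairIdx.ofNe hk) := by
  unfold symExtN PairIdx.ofNe
  split_ifs <;> first | rfl | omega

section Model

variable {p : ℕ} (s0 c0 : ℝ) (c : Fin p → Fin p → ℕ)

def edgeCountLaw (w : ℝ) : Measure (PairIdx p → ℕ) :=
  Measure.pi fun q : PairIdx p => negBinomialMeasure (c q.1.1 q.1.2) (1 / (w + 1))

def nodeLaw (s : PairIdx p → ℕ) : Measure (Fin p → ℝ) :=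
  Measure.pi fun j : Fin p =>
    invBetaMeasure (s0 + ∑ k ∈ Finset.univ.erase j, (symExtN s j k : ℝ))
      (c0 + (∑ k ∈ Finset.univ.erase j, (c j k : ℝ)) + 1)

def condJointLaw (w : ℝ) : Measure (ℝ × (PairIdx p → ℕ) × (Fin p → ℝ)) :=
  (edgeCountLaw c w).bind fun s => (nodeLaw s0 c0 c s).map fun y => (w, s, y)

theorem invBetaNegBinomialJoint_eq_bind :
    invBetaNegBinomialJoint p s0 c0 c =
      (invBetaMeasure s0 (c0 + 1)).bind (condJointLaw s0 c0 c) :=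
  rfl

variable {s0 c0 c}

theorem isProbabilityMeasure_nodeLaw_factor (hs0 : 0 < s0) (hc0 : 0 < c0 + 1)
    (s : PairIdx p → ℕ) (j : Fin p) :
    IsProbabilityMeasure (invBetaMeasure (s0 + ∑ k ∈ Finset.univ.erase j, (symExtN s j k : ℝ))
      (c0 + (∑ k ∈ Finset.univ.erase j, (c j k : ℝ)) + 1)) :=
  isProbabilityMeasure_invBetaMeasure (by positivity)
    (by rw [add_right_comm]; exact add_pos_of_pos_of_nonneg hc0 (by positivity))

theorem isProbabilityMeasure_nodeLaw (hs0 : 0 < s0) (hc0 : 0 < c0 + 1) (s : PairIdx p → ℕ) :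
    IsProbabilityMeasure (nodeLaw s0 c0 c s) := by
  have := isProbabilityMeasure_nodeLaw_factor (c := c) hs0 hc0 s
  unfold nodeLaw
  infer_instance

theorem isProbabilityMeasure_edgeCountLaw {w : ℝ} (hw : 0 ≤ w) :
    IsProbabilityMeasure (edgeCountLaw c w) := by
  have hq := one_div_add_one_mem_Ioc hw
  have := fun q : PairIdx p => isProbabilityMeasure_negBinomialMeasure (c q.1.1 q.1.2) hq.1 hq.2
  unfold edgeCountLaw
  infer_instance

theorem measurable_condJointLaw (hs0 : 0 < s0) (hc0 : 0 < c0 + 1) :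
    Measurable (condJointLaw s0 c0 c) := by
  unfold condJointLaw
  refine Measure.measurable_bind_of_countable (fun s => ?_) fun s => ?_
  · simp_rw [edgeCountLaw, Measure.pi_singleton]
    exact Finset.measurable_prod _ fun q _ =>
      measurable_negBinomialMeasure_singleton (by fun_prop) _ _
  · have := isProbabilityMeasure_nodeLaw (c := c) hs0 hc0 s
    have hcomp : (fun w => (nodeLaw s0 c0 c s).map fun y => (w, s, y)) =
        Measure.map (fun z : ℝ × (Fin p → ℝ) => (z.1, s, z.2)) ∘
          fun w => (nodeLaw s0 c0 c s).map (Prod.mk w) :=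
      funext fun w => (Measure.map_map (g := fun z : ℝ × (Fin p → ℝ) => (z.1, s, z.2))
        (by fun_prop) measurable_prodMk_left).symm
    rw [hcomp]
    exact (Measure.measurable_map _ (by fun_prop)).comp Measurable.map_prodMk_left

theorem condJointLaw_map_fst (hs0 : 0 < s0) (hc0 : 0 < c0 + 1) {w : ℝ} (hw : 0 ≤ w) :
    (condJointLaw s0 c0 c w).map Prod.fst = Measure.dirac w := by
  have := isProbabilityMeasure_edgeCountLaw (c := c) hw
  have hdirac (s : PairIdx p → ℕ) :
      ((nodeLaw s0 c0 c s).map fun y => (w, s, y)).map Prod.fst = Measure.dirac w := by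
    have := isProbabilityMeasure_nodeLaw (c := c) hs0 hc0 s
    rw [Measure.map_map measurable_fst (by fun_prop), Function.comp_def, Measure.map_const,
      measure_univ, one_smul]
  rw [condJointLaw, Measure.map_bind (measurable_of_countable _) measurable_fst]
  simp [hdirac]

theorem nodeLaw_map_eval (hs0 : 0 < s0) (hc0 : 0 < c0 + 1) (s : PairIdx p → ℕ) (j : Fin p) :
    (nodeLaw s0 c0 c s).map (Function.eval j) =
      invBetaMeasure (s0 + ↑(∑ q ∈ PairIdx.incident j, s q))
        (c0 + 1 + ↑(∑ k ∈ Finset.univ.erase j, c j k)) := by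
  have := isProbabilityMeasure_nodeLaw_factor (c := c) hs0 hc0 s
  rw [nodeLaw, Measure.pi_map_eval]
  simp only [measure_univ, prod_const_one, one_smul]
  rw [PairIdx.sum_incident j fun k hk => (symExtN_eq_ofNe s hk).symm]
  push_cast
  ring_nf

theorem edgeCountLaw_map_sum_incident (hsym : ∀ j k, c k j = c j k) {w : ℝ} (hw : 0 ≤ w)
    (j : Fin p) :
    (edgeCountLaw c w).map (fun s => ∑ q ∈ PairIdx.incident j, s q) =
      negBinomialMeasure (∑ k ∈ Finset.univ.erase j, c j k) (1 / (w + 1)) := by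
  have hq := one_div_add_one_mem_Ioc hw
  rw [edgeCountLaw, negBinomialMeasure_pi_map_finsetSum _ hq.1 hq.2,
    PairIdx.sum_incident j fun k hk => PairIdx.apply_ofNe_of_symm hsym hk]

theorem condJointLaw_map_node (hs0 : 0 < s0) (hc0 : 0 < c0 + 1) (hsym : ∀ j k, c k j = c j k)
    {w : ℝ} (hw : 0 ≤ w) (j : Fin p) :
    (condJointLaw s0 c0 c w).map (fun x => x.2.2 j) =
      (negBinomialMeasure (∑ k ∈ Finset.univ.erase j, c j k) (1 / (w + 1))).bind
        fun t => invBetaMeasure (s0 + t) (c0 + 1 + ↑(∑ k ∈ Finset.univ.erase j, c j k)) := by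
  have hY : Measurable fun x : ℝ × (PairIdx p → ℕ) × (Fin p → ℝ) => x.2.2 j := by fun_prop
  rw [condJointLaw, Measure.map_bind (measurable_of_countable _) hY,
    ← edgeCountLaw_map_sum_incident hsym hw,
    Measure.bind_map (measurable_of_countable _) (measurable_of_countable _)]
  congr 1
  funext s
  rw [Measure.map_map hY (by fun_prop)]
  exact nodeLaw_map_eval hs0 hc0 s j

theorem invBetaNegBinomialJoint_map_fst (hs0 : 0 < s0) (hc0 : 0 < c0 + 1) :
    (invBetaNegBinomialJoint p s0 c0 c).map Prod.fst = invBetaMeasure s0 (c0 + 1) := by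
  rw [invBetaNegBinomialJoint_eq_bind, Measure.map_bind (measurable_condJointLaw hs0 hc0)
      measurable_fst,
    Measure.bind_congr_right ((ae_pos_invBetaMeasure _ _).mono fun w hw =>
      condJointLaw_map_fst hs0 hc0 hw.le),
    Measure.bind_dirac]

theorem invBetaNegBinomialJoint_map_node (hs0 : 0 < s0) (hc0 : 0 < c0 + 1)
    (hsym : ∀ j k, c k j = c j k) (j : Fin p) :
    (invBetaNegBinomialJoint p s0 c0 c).map (fun x => x.2.2 j) = invBetaMeasure s0 (c0 + 1) := by
  rw [invBetaNegBinomialJoint_eq_bind, Measure.map_bind (measurable_condJointLaw hs0 hc0)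
      (by fun_prop),
    Measure.bind_congr_right ((ae_pos_invBetaMeasure _ _).mono fun w hw =>
      condJointLaw_map_node hs0 hc0 hsym hw.le j)]
  exact invBetaMeasure_bind_negBinomialMeasure_bind hs0 hc0 _

end Model

theorem invBetaNegBinomial_marginal_Yj_general (p : ℕ) (s0 c0 : ℝ)
    (hs0 : 0 < s0) (hc0 : 0 < c0) (c : Fin p → Fin p → ℕ)
    (hsym : ∀ j k, c k j = c j k) (j : Fin p) :
    (invBetaNegBinomialJoint p s0 c0 c).map (fun x => x.2.2 j) =
        invBetaMeasure s0 (c0 + 1) ∧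
      (invBetaNegBinomialJoint p s0 c0 c).map (fun x => x.2.2 j) =
        (invBetaNegBinomialJoint p s0 c0 c).map (fun x => x.1) := by
  have hc1 : 0 < c0 + 1 := by linarith
  have hY := invBetaNegBinomialJoint_map_node hs0 hc1 hsym j
  exact ⟨hY, hY.trans (invBetaNegBinomialJoint_map_fst hs0 hc1).symm⟩

/-- In the inverse-beta–negative-binomial hierarchical graphical model, the marginal
law of every node `Y_j` is the inverse beta distribution `IBe(s0, c0 + 1)`; in
particular each `Y_j` has the same marginal law as the anchor variable `W`. -/
theorem invBetaNegBinomial_marginal_Yj (p : ℕ) (hp : 2 ≤ p) (s0 c0 : ℝ)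
    (hs0 : 0 < s0) (hc0 : 0 < c0) (c : Fin p → Fin p → ℕ)
    (hc : ∀ j k, j ≠ k → 1 ≤ c j k) (hsym : ∀ j k, c k j = c j k) (j : Fin p) :
    (invBetaNegBinomialJoint p s0 c0 c).map (fun x => x.2.2 j) =
        invBetaMeasure s0 (c0 + 1) ∧
      (invBetaNegBinomialJoint p s0 c0 c).map (fun x => x.2.2 j) =
        (invBetaNegBinomialJoint p s0 c0 c).map (fun x => x.1) :=
  invBetaNegBinomial_marginal_Yj_general p s0 c0 hs0 hc0 c hsym j
end
end
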